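/- arXiv:1710.03871 — 2 statements merged into one kernel-verified Lean document; each statement's English description precedes it below -/
import Mathlib

section
/- For every n ≥ 1, the derivative of the path domination polynomial at -1 satisfies: D'(P_n,-1) = 0 if n ≡ 0 or 2 (mod 4), D'(P_n,-1) = (n+1)/2 if n ≡ 1 (mod 4), and D'(P_n,-1) = -(n+1)/2 if n ≡ 3 (mod 4). -/
open SimpleGraph Polynomial Finset

open Classical in
/-- The number of dominating sets of `G` of cardinality `i`. -/
noncomputable def domCount {V : Type*} [Fintype V] [DecidableEq V]
    (G : SimpleGraph V) (i : ℕ) : ℕ :=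
  (Finset.univ.filter fun S : Finset V =>
    S.card = i ∧ ∀ v : V, v ∈ S ∨ ∃ u ∈ S, G.Adj u v).card

/-- The domination polynomial of `G`. -/
noncomputable def domPoly {V : Type*} [Fintype V] [DecidableEq V]
    (G : SimpleGraph V) : Polynomial ℤ :=
  ∑ i ∈ Finset.range (Fintype.card V + 1), Polynomial.C (domCount G i : ℤ) * Polynomial.X ^ i

/-- The domination number of `G`. -/
noncomputable def domNum {V : Type*} [Fintype V] [DecidableEq V] (G : SimpleGraph V) : ℕ :=
  sInf {i | ∃ S : Finset V, S.card = i ∧ ∀ v : V, v ∈ S ∨ ∃ u ∈ S, G.Adj u v}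


/-!
Splitting a dominating set of `P_{n+1}` according to whether it contains the last vertex relates
`D(P_n)` to two companion sums over subsets of `{0, …, n-1}`: those that also dominate vertex `n`,
and those that may leave vertex `n-1` undominated. Eliminating the companions gives
`D(P_{n+3}) = x (D(P_{n+2}) + D(P_{n+1}) + D(P_n))` for every `n ≥ 0`, with `D(P_0) = 1`.

At `x = -1` the recurrence says that any four consecutive values `u_n = D(P_n, -1)` sum to `0`,
so `u` is `4`-periodic (`1, -1, -1, 1, …`). Differentiating, four consecutive values of
`d_n = D'(P_n, -1)` sum to `-u_{n+3}`, hence `d_{n+4} = d_n + u_{n+3} - u_n`: along each residue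
class mod `4`, `d` is linear with slope `2, 0, -2, 0`.
-/

open Classical in
theorem domPoly_eq_sum_dominating {V : Type*} [Fintype V] [DecidableEq V] (G : SimpleGraph V) :
    domPoly G = ∑ S : Finset V with ∀ v, v ∈ S ∨ ∃ u ∈ S, G.Adj u v, X ^ #S := by
  rw [domPoly, ← sum_fiberwise_of_maps_to (g := card) (t := range (Fintype.card V + 1))
    fun S _ => mem_range.2 (Nat.lt_succ_of_le (card_le_univ S))]
  refine sum_congr rfl fun i _ => ?_
  rw [sum_congr rfl fun S hS => by rw [(mem_filter.1 hS).2], sum_const, domCount, filter_filter]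
  simp [and_comm]

section PathDomination

open Classical

def PathDominates (S : Finset ℕ) (v : ℕ) : Prop := ∃ u ∈ S, u ≤ v + 1 ∧ v ≤ u + 1

/-- With `k = 1` these are the dominating sets of `P_n`; `k = 0` additionally asks that `n` be
dominated (so `n - 1 ∈ S`), and `k = 2` leaves vertex `n - 1` free. -/
noncomputable def pathDomSum (k n : ℕ) : ℤ[X] :=
  ∑ S ∈ (range n).powerset with ∀ v, v + k ≤ n → PathDominates S v, X ^ #S

theorem pathDominates_insert_iff {S : Finset ℕ} {k n : ℕ} (hk : k ≤ 3) :
    (∀ v, v + k ≤ n + 1 → PathDominates (insert n S) v) ↔ ∀ v, v + 2 ≤ n → PathDominates S v := by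
  constructor
  · intro h v hv
    obtain ⟨u, hu, huv⟩ := h v (by omega)
    exact ⟨u, (mem_insert.1 hu).resolve_left (by omega), huv⟩
  · intro h v hv
    by_cases hvn : v + 2 ≤ n
    · obtain ⟨u, hu, huv⟩ := h v hvn
      exact ⟨u, mem_insert_of_mem hu, huv⟩
    · exact ⟨n, mem_insert_self n S, by omega⟩

theorem pathDomSum_succ {k : ℕ} (hk : k ≤ 3) (n : ℕ) :
    pathDomSum k (n + 1) =
      (∑ S ∈ (range n).powerset with ∀ v, v + k ≤ n + 1 → PathDominates S v, X ^ #S) +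
        X * pathDomSum 2 n := by
  rw [pathDomSum, pathDomSum, sum_filter, sum_filter, sum_filter, range_add_one,
    sum_powerset_insert notMem_range_self, mul_sum]
  congr 1
  refine sum_congr rfl fun S hS => ?_
  have hnS : n ∉ S := fun h => notMem_range_self (mem_powerset.1 hS h)
  simp only [pathDominates_insert_iff hk, card_insert_of_notMem hnS, pow_succ', mul_ite, mul_zero]

theorem pathDomSum_zero_succ (n : ℕ) : pathDomSum 0 (n + 1) = X * pathDomSum 2 n := by
  rw [pathDomSum_succ (by norm_num), sum_eq_zero, zero_add]
  intro S hS
  simp only [mem_filter] at hS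
  obtain ⟨hSn, h⟩ := hS
  obtain ⟨u, hu, hu'⟩ := h (n + 1) le_rfl
  have := mem_range.1 (mem_powerset.1 hSn hu)
  omega

theorem pathDomSum_succ_succ {k : ℕ} (hk : k ≤ 2) (n : ℕ) :
    pathDomSum (k + 1) (n + 1) = pathDomSum k n + X * pathDomSum 2 n := by
  rw [pathDomSum_succ (by omega)]
  congr 1
  unfold pathDomSum
  simp only [← add_assoc, add_le_add_iff_right]

theorem pathDomSum_zero_zero : pathDomSum 0 0 = 0 := by
  simp [pathDomSum, PathDominates, filter_singleton]

theorem pathDomSum_succ_zero (k : ℕ) : pathDomSum (k + 1) 0 = 1 := by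
  simp [pathDomSum]

theorem pathDomSum_one_add_three (n : ℕ) :
    pathDomSum 1 (n + 3) =
      X * (pathDomSum 1 (n + 2) + pathDomSum 1 (n + 1) + pathDomSum 1 n) := by
  have hA (m : ℕ) := pathDomSum_zero_succ m
  have hD (m : ℕ) : pathDomSum 1 (m + 1) = pathDomSum 0 m + X * pathDomSum 2 m :=
    pathDomSum_succ_succ (by norm_num) m
  have hE (m : ℕ) : pathDomSum 2 (m + 1) = pathDomSum 1 m + X * pathDomSum 2 m :=
    pathDomSum_succ_succ (by norm_num) m
  linear_combination hD (n + 2) + hA (n + 1) + X * hE (n + 1) - X * hD (n + 1) - X * hA n +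
    X * hE n

theorem pathGraph_dominating_iff {n : ℕ} (S : Finset (Fin n)) :
    (∀ v, v ∈ S ∨ ∃ u ∈ S, (pathGraph n).Adj u v) ↔
      ∀ v, v + 1 ≤ n → PathDominates (S.map Fin.valEmbedding) v := by
  simp only [PathDominates, mem_map, Fin.valEmbedding_apply, pathGraph_adj]
  constructor
  · intro h v hv
    rcases h ⟨v, hv⟩ with h | ⟨u, hu, huv⟩
    · exact ⟨v, ⟨_, h, rfl⟩, by omega⟩
    · exact ⟨u, ⟨u, hu, rfl⟩, by simp at huv; omega⟩
  · intro h v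
    obtain ⟨_, ⟨u, hu, rfl⟩, huv⟩ := h v v.isLt
    rcases eq_or_ne (u : ℕ) v with huv' | huv'
    · exact Or.inl (Fin.ext huv' ▸ hu)
    · exact Or.inr ⟨u, hu, by omega⟩

theorem map_valEmbedding_filter_mem {n : ℕ} {T : Finset ℕ} (hT : T ⊆ range n) :
    ({i : Fin n | (i : ℕ) ∈ T} : Finset (Fin n)).map Fin.valEmbedding = T := by
  ext a
  simp only [mem_map, mem_filter, mem_univ, true_and, Fin.valEmbedding_apply]
  exact ⟨fun ⟨i, hi, hia⟩ => hia ▸ hi, fun ha => ⟨⟨a, mem_range.1 (hT ha)⟩, ha, rfl⟩⟩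

theorem domPoly_pathGraph (n : ℕ) : domPoly (pathGraph n) = pathDomSum 1 n := by
  rw [domPoly_eq_sum_dominating, pathDomSum]
  refine sum_nbij' (fun S => S.map Fin.valEmbedding) (fun T => ({i | (i : ℕ) ∈ T} : Finset (Fin n)))
    ?_ ?_ ?_ ?_ fun S _ => by rw [card_map]
  · intro S hS
    simp only [mem_filter, mem_univ, true_and, mem_powerset] at hS ⊢
    exact ⟨fun a ha => by obtain ⟨i, -, rfl⟩ := mem_map.1 ha; exact mem_range.2 i.isLt,
      (pathGraph_dominating_iff S).1 hS⟩
  · intro T hT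
    simp only [mem_filter, mem_powerset] at hT
    have hS := map_valEmbedding_filter_mem hT.1
    generalize ({i | (i : ℕ) ∈ T} : Finset (Fin n)) = S at hS ⊢
    simp only [mem_filter, mem_univ, true_and, pathGraph_dominating_iff, hS]
    exact hT.2
  · intro S _
    ext i
    simp [Fin.val_inj]
  · intro T hT
    simp only [mem_filter, mem_powerset] at hT
    exact map_valEmbedding_filter_mem hT.1

end PathDomination

theorem domPoly_pathGraph_add_three (n : ℕ) :
    domPoly (pathGraph (n + 3)) = X * (domPoly (pathGraph (n + 2)) +
      domPoly (pathGraph (n + 1)) + domPoly (pathGraph n)) := by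
  simp only [domPoly_pathGraph, pathDomSum_one_add_three]

theorem domPoly_pathGraph_zero : domPoly (pathGraph 0) = 1 := by
  rw [domPoly_pathGraph, pathDomSum_succ_zero]

theorem domPoly_pathGraph_one : domPoly (pathGraph 1) = X := by
  rw [domPoly_pathGraph, pathDomSum_succ_succ (by norm_num), pathDomSum_zero_zero,
    pathDomSum_succ_zero, zero_add, mul_one]

theorem domPoly_pathGraph_two : domPoly (pathGraph 2) = X ^ 2 + 2 * X := by
  rw [domPoly_pathGraph, pathDomSum_succ_succ (by norm_num), pathDomSum_zero_succ,
    pathDomSum_succ_succ (by norm_num), pathDomSum_succ_zero, pathDomSum_succ_zero]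
  ring

section PeriodAtNegOne

variable {p : ℕ → ℤ[X]} (hp : ∀ n, p (n + 3) = X * (p (n + 2) + p (n + 1) + p n))
include hp

theorem eval_neg_one_add_four (n : ℕ) : (p (n + 4)).eval (-1) = (p n).eval (-1) := by
  have h (m : ℕ) : (p (m + 3)).eval (-1) =
      -((p (m + 2)).eval (-1) + (p (m + 1)).eval (-1) + (p m).eval (-1)) := by
    simp [hp]
  linear_combination h (n + 1) - h n

theorem derivative_eval_neg_one_add_four (n : ℕ) :
    (derivative (p (n + 4))).eval (-1) =
      (derivative (p n)).eval (-1) + (p (n + 3)).eval (-1) - (p n).eval (-1) := by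
  have h (m : ℕ) : (derivative (p (m + 3))).eval (-1) =
      (p (m + 2)).eval (-1) + (p (m + 1)).eval (-1) + (p m).eval (-1) -
        ((derivative (p (m + 2))).eval (-1) + (derivative (p (m + 1))).eval (-1) +
          (derivative (p m)).eval (-1)) := by
    simp only [hp, derivative_mul, derivative_X, derivative_add, eval_mul, eval_add, eval_X, one_mul]
    ring
  linear_combination h (n + 1) - h n

theorem eval_neg_one_four_mul_add (m r : ℕ) : (p (4 * m + r)).eval (-1) = (p r).eval (-1) := by
  induction m with
  | zero => simp
  | succ m ih => rw [← ih, show 4 * (m + 1) + r = 4 * m + r + 4 by ring, eval_neg_one_add_four hp]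

theorem derivative_eval_neg_one_four_mul_add (m r : ℕ) :
    (derivative (p (4 * m + r))).eval (-1) =
      (derivative (p r)).eval (-1) + m * ((p (r + 3)).eval (-1) - (p r).eval (-1)) := by
  induction m with
  | zero => simp
  | succ m ih =>
    rw [show 4 * (m + 1) + r = 4 * m + r + 4 by ring, derivative_eval_neg_one_add_four hp, ih,
      add_assoc (4 * m) r 3, eval_neg_one_four_mul_add hp, eval_neg_one_four_mul_add hp]
    push_cast
    ring

end PeriodAtNegOne

theorem domPoly_path_deriv_neg_one_general (n : ℕ) :
    (n % 4 = 0 ∨ n % 4 = 2 →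
        (derivative (domPoly (pathGraph n))).eval (-1) = 0) ∧
    (n % 4 = 1 →
        2 * (derivative (domPoly (pathGraph n))).eval (-1) = (n : ℤ) + 1) ∧
    (n % 4 = 3 →
        2 * (derivative (domPoly (pathGraph n))).eval (-1) = -((n : ℤ) + 1)) := by
  obtain ⟨m, r, hr, rfl⟩ : ∃ m r, r < 4 ∧ n = 4 * m + r :=
    ⟨n / 4, n % 4, Nat.mod_lt n (by norm_num), (Nat.div_add_mod n 4).symm⟩
  rw [derivative_eval_neg_one_four_mul_add (p := fun n => domPoly (pathGraph n))
    domPoly_pathGraph_add_three]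
  interval_cases r <;>
    simp [domPoly_pathGraph_add_three, domPoly_pathGraph_zero, domPoly_pathGraph_one,
      domPoly_pathGraph_two] <;>
    ring

theorem domPoly_path_deriv_neg_one (n : ℕ) (hn : 1 ≤ n) :
    (n % 4 = 0 ∨ n % 4 = 2 →
        (derivative (domPoly (pathGraph n))).eval (-1) = 0) ∧
    (n % 4 = 1 →
        2 * (derivative (domPoly (pathGraph n))).eval (-1) = (n : ℤ) + 1) ∧
    (n % 4 = 3 →
        2 * (derivative (domPoly (pathGraph n))).eval (-1) = -((n : ℤ) + 1)) :=
  domPoly_path_deriv_neg_one_general n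
end

section
/- For every n ≥ 1, ord_3(D(P_n,-3)) = ⌈n/3⌉ if n ≡ 0 or 1 (mod 3), and ord_3(D(P_n,-3)) ∈ {⌈n/3⌉, ⌈n/3⌉+1} if n ≡ 2 (mod 3). -/
open SimpleGraph Polynomial Finset

/-!
Encode a set of vertices of `P_n` by its indicator word: it is dominating exactly when the word,
padded by a `false` at each end, contains no three consecutive `false`s. Splitting off the first
letter gives a three-state transfer recursion for the weighted count of such words, which
eliminates to `D(P_{n+3}) = x (D(P_{n+2}) + D(P_{n+1}) + D(P_n))`.

At `x = -3` write `d_{3k} = 3^k a_k`, `d_{3k+1} = 3^(k+1) b_k`, `d_{3k+2} = 3^(k+1) c_k`; the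
recurrence makes `(a_k, b_k, c_k)` the orbit of `(1, -1, 1)` under an integral linear map. Modulo 9
this orbit is periodic of period 18, and on it `3 ∤ a_k`, `3 ∤ b_k` and `9 ∤ c_k`.
-/

namespace SimpleGraph

variable {V : Type*} [Fintype V] [DecidableEq V]

def IsDominatingSet (G : SimpleGraph V) (S : Finset V) : Prop :=
  ∀ v, v ∈ S ∨ ∃ u ∈ S, G.Adj u v

open Classical in
theorem domPoly_eq_sum_isDominatingSet (G : SimpleGraph V) :
    domPoly G = ∑ S with G.IsDominatingSet S, X ^ #S := by
  rw [domPoly, ← sum_fiberwise_of_maps_to (g := card) (t := range (Fintype.card V + 1))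
    fun S _ => mem_range_succ_iff.2 (card_le_univ S)]
  refine sum_congr rfl fun i _ => ?_
  rw [filter_filter, sum_congr rfl fun S hS => by rw [(mem_filter.1 hS).2.2], sum_const,
    nsmul_eq_mul, domCount, map_natCast]
  simp only [IsDominatingSet, and_comm]

end SimpleGraph

theorem List.triple_infix_iff {α : Type*} {a b c : α} {l : List α} :
    [a, b, c] <:+: l ↔ ∃ k, l[k]? = some a ∧ l[k + 1]? = some b ∧ l[k + 2]? = some c := by
  rw [List.infix_iff_getElem?]
  constructor
  · rintro ⟨k, -, h⟩
    exact ⟨k, by simpa using h 0, by simpa [add_comm] using h 1, by simpa [add_comm] using h 2⟩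
  · rintro ⟨k, ha, hb, hc⟩
    refine ⟨k, ?_, fun i hi => ?_⟩
    · have := (List.getElem?_eq_some_iff.1 hc).1
      simp only [List.length_cons, List.length_nil]
      omega
    · simp only [List.length_cons, List.length_nil] at hi
      interval_cases i <;> simpa [add_comm]

theorem getElem?_padded_ofFn_eq_some_false {n : ℕ} (f : Fin n → Bool) (j : ℕ) :
    (false :: (List.ofFn f ++ [false]))[j]? = some false ↔
      j < n + 2 ∧ ∀ i : Fin n, i.val + 1 = j → f i = false := by
  rcases j with _ | j
  · simp
  rw [List.getElem?_cons_succ]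
  rcases lt_trichotomy j n with hj | rfl | hj
  · rw [List.getElem?_append_left (by simpa), List.getElem?_ofFn]
    simp only [hj, dite_true, Option.some.injEq]
    refine ⟨fun h => ⟨by omega, fun i hi => ?_⟩, fun h => h.2 _ rfl⟩
    rwa [show i = ⟨j, hj⟩ from Fin.ext (Nat.add_right_cancel hi)]
  · simpa using fun i hi => absurd hi i.isLt.ne
  · simp [hj.not_ge]

namespace SimpleGraph

theorem isDominatingSet_pathGraph_iff {n : ℕ} (S : Finset (Fin n)) :
    (pathGraph n).IsDominatingSet S ↔
      ¬ [false, false, false] <:+: false :: (List.ofFn (fun i => decide (i ∈ S)) ++ [false]) := by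
  simp only [List.triple_infix_iff, getElem?_padded_ofFn_eq_some_false, not_exists,
    IsDominatingSet, decide_eq_false_iff_not]
  constructor
  · rintro hS k ⟨⟨-, hprev⟩, ⟨-, hself⟩, ⟨hk, hnext⟩⟩
    obtain hv | ⟨u, hu, huv⟩ := hS ⟨k, by omega⟩
    · exact hself _ rfl hv
    · rcases pathGraph_adj.1 huv with huv | huv
      · exact hprev u huv hu
      · exact hnext u (by simp only at huv; omega) hu
  · intro h v
    by_contra! hv
    obtain ⟨hvS, hvadj⟩ := hv
    exact h v ⟨⟨by omega, fun u hu huS => hvadj u huS (pathGraph_adj.2 (.inl hu))⟩,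
      ⟨by omega, fun u hu huS => hvS (Fin.ext (Nat.add_right_cancel hu) ▸ huS)⟩,
      ⟨by omega, fun u hu huS => hvadj u huS (pathGraph_adj.2 (.inr (by omega)))⟩⟩

end SimpleGraph

section Words

variable {R : Type*} [CommSemiring R] (x : R)

/-- The prefix `pre` encodes the vertex just left of the word: `[]` if it lies in the set,
`[false]` if it does not but is dominated (or does not exist), `[false, false]` if it is not yet
dominated, so that the first letter must be `true`. -/
def wordSum (pre : List Bool) (n : ℕ) : R :=
  ∑ f : Fin n → Bool,
    if [false, false, false] <:+: pre ++ List.ofFn f ++ [false] then 0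
    else ∏ i, if f i then x else 1

theorem wordSum_zero (pre : List Bool) :
    wordSum x pre 0 = if [false, false, false] <:+: pre ++ [false] then 0 else 1 := by
  simp [wordSum]

theorem wordSum_succ (pre : List Bool) (n : ℕ) :
    wordSum x pre (n + 1) = x * wordSum x (pre ++ [true]) n + wordSum x (pre ++ [false]) n := by
  rw [wordSum, ← (Fin.consEquiv fun _ => Bool).sum_comp, Fintype.sum_prod_type,
    Fintype.sum_bool, wordSum, wordSum, mul_sum]
  congr 1 <;> refine sum_congr rfl fun f _ => ?_ <;>
    simp [Fin.consEquiv, List.ofFn_succ, Fin.prod_univ_succ]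

theorem wordSum_congr {pre pre' : List Bool}
    (h : ∀ l, [false, false, false] <:+: pre ++ l ↔ [false, false, false] <:+: pre' ++ l)
    (n : ℕ) : wordSum x pre n = wordSum x pre' n := by
  simp only [wordSum, List.append_assoc, h]

theorem wordSum_of_infix {pre : List Bool} (h : [false, false, false] <:+: pre) (n : ℕ) :
    wordSum x pre n = 0 := by
  simp [wordSum, List.append_assoc, h.trans (List.prefix_append _ _).isInfix]

theorem wordSum_nil_succ (n : ℕ) :
    wordSum x [] (n + 1) = x * wordSum x [] n + wordSum x [false] n := by
  rw [wordSum_succ, wordSum_congr x (pre := [] ++ [true]) (pre' := [])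
    (by simp [List.infix_cons_iff])]
  rfl

theorem wordSum_false_succ (n : ℕ) :
    wordSum x [false] (n + 1) = x * wordSum x [] n + wordSum x [false, false] n := by
  rw [wordSum_succ, wordSum_congr x (pre := [false] ++ [true]) (pre' := [])
    (by simp [List.infix_cons_iff])]
  rfl

theorem wordSum_false_false_succ (n : ℕ) :
    wordSum x [false, false] (n + 1) = x * wordSum x [] n := by
  rw [wordSum_succ, wordSum_congr x (pre := [false, false] ++ [true]) (pre' := [])
    (by simp [List.infix_cons_iff]), wordSum_of_infix x (pre := [false, false] ++ [false])
    (by simp), add_zero]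

theorem wordSum_false_add_three (n : ℕ) :
    wordSum x [false] (n + 3) =
      x * (wordSum x [false] (n + 2) + wordSum x [false] (n + 1) + wordSum x [false] n) := by
  simp only [wordSum_false_succ, wordSum_nil_succ, wordSum_false_false_succ]
  ring

end Words

theorem domPoly_pathGraph_eq_wordSum (n : ℕ) :
    domPoly (pathGraph n) = wordSum (X : ℤ[X]) [false] n := by
  classical
  let e : Finset (Fin n) ≃ (Fin n → Bool) :=
    ⟨fun S i => decide (i ∈ S), fun f => univ.filter (f ·), fun S => by ext; simp,
      fun f => by ext; simp⟩
  rw [domPoly_eq_sum_isDominatingSet, sum_filter, wordSum]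
  refine Fintype.sum_equiv e _ _ fun S => ?_
  simp only [e, Equiv.coe_fn_mk, List.cons_append, List.nil_append,
    isDominatingSet_pathGraph_iff, ite_not, decide_eq_true_eq]
  rw [prod_ite_mem, univ_inter, prod_const]

theorem domPoly_pathGraph_zero_one_two :
    domPoly (pathGraph 0) = 1 ∧ domPoly (pathGraph 1) = X ∧
      domPoly (pathGraph 2) = X ^ 2 + 2 * X := by
  have h₀ : wordSum (X : ℤ[X]) [] 0 = 1 := by rw [wordSum_zero, if_neg (by decide)]
  have h₁ : wordSum (X : ℤ[X]) [false] 0 = 1 := by rw [wordSum_zero, if_neg (by decide)]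
  have h₂ : wordSum (X : ℤ[X]) [false, false] 0 = 0 := by rw [wordSum_zero, if_pos (by decide)]
  refine ⟨?_, ?_, ?_⟩ <;>
    simp only [domPoly_pathGraph_eq_wordSum, wordSum_false_succ, wordSum_nil_succ,
      wordSum_false_false_succ, h₀, h₁, h₂] <;> ring

def blockStep {R : Type*} [CommRing R] (v : R × R × R) : R × R × R :=
  (-(v.1 + 3 * v.2.1 + 3 * v.2.2), v.1 + 2 * v.2.1 + 2 * v.2.2,
    -(2 * v.1 + 3 * v.2.1 + 4 * v.2.2))

theorem blockStep_iterate {d : ℕ → ℤ}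
    (hd : ∀ n, d (n + 3) = -3 * (d (n + 2) + d (n + 1) + d n)) {a b c : ℤ}
    (h₀ : d 0 = a) (h₁ : d 1 = 3 * b) (h₂ : d 2 = 3 * c) (k : ℕ) :
    d (3 * k) = 3 ^ k * (blockStep^[k] (a, b, c)).1 ∧
      d (3 * k + 1) = 3 ^ (k + 1) * (blockStep^[k] (a, b, c)).2.1 ∧
      d (3 * k + 2) = 3 ^ (k + 1) * (blockStep^[k] (a, b, c)).2.2 := by
  induction k with
  | zero => simp [h₀, h₁, h₂]
  | succ k ih =>
    obtain ⟨e₀, e₁, e₂⟩ := ih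
    have e₃ : d (3 * k + 3) = -3 * (d (3 * k + 2) + d (3 * k + 1) + d (3 * k)) := hd _
    have e₄ : d (3 * k + 3 + 1) = -3 * (d (3 * k + 3) + d (3 * k + 2) + d (3 * k + 1)) := hd _
    have e₅ : d (3 * k + 3 + 2) = -3 * (d (3 * k + 3 + 1) + d (3 * k + 3) + d (3 * k + 2)) :=
      hd _
    rw [Function.iterate_succ_apply', blockStep, show 3 * (k + 1) = 3 * k + 3 by ring]
    refine ⟨?_, ?_, ?_⟩
    · linear_combination e₃ - 3 * e₂ - 3 * e₁ - 3 * e₀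
    · linear_combination e₄ - 3 * e₃ + 6 * e₂ + 6 * e₁ + 9 * e₀
    · linear_combination e₅ - 3 * e₄ + 6 * e₃ - 12 * e₂ - 9 * e₁ - 18 * e₀

theorem blockStep_semiconj {R S : Type*} [CommRing R] [CommRing S] (f : R →+* S) :
    Function.Semiconj (Prod.map f (Prod.map f f)) blockStep blockStep := fun v => by
  simp [blockStep, map_ofNat]

theorem isPeriodicPt_blockStep_mod_nine :
    Function.IsPeriodicPt blockStep 18 ((1, -1, 1) : ZMod 9 × ZMod 9 × ZMod 9) := by
  decide

theorem blockStep_iterate_mod_nine (k : ℕ) :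
    3 * (blockStep^[k] ((1, -1, 1) : ZMod 9 × ZMod 9 × ZMod 9)).1 ≠ 0 ∧
      3 * (blockStep^[k] ((1, -1, 1) : ZMod 9 × ZMod 9 × ZMod 9)).2.1 ≠ 0 ∧
      (blockStep^[k] ((1, -1, 1) : ZMod 9 × ZMod 9 × ZMod 9)).2.2 ≠ 0 := by
  rw [← isPeriodicPt_blockStep_mod_nine.iterate_mod_apply]
  have h : ∀ j < 18, 3 * (blockStep^[j] ((1, -1, 1) : ZMod 9 × ZMod 9 × ZMod 9)).1 ≠ 0 ∧
      3 * (blockStep^[j] ((1, -1, 1) : ZMod 9 × ZMod 9 × ZMod 9)).2.1 ≠ 0 ∧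
      (blockStep^[j] ((1, -1, 1) : ZMod 9 × ZMod 9 × ZMod 9)).2.2 ≠ 0 := by
    decide
  exact h _ (Nat.mod_lt _ (by norm_num))

theorem not_three_dvd_of_three_mul_ne_zero {a : ℤ} (h : 3 * (a : ZMod 9) ≠ 0) : ¬ 3 ∣ a := by
  rintro ⟨m, rfl⟩
  apply h
  push_cast
  rw [← mul_assoc, show (3 * 3 : ZMod 9) = 0 by decide, zero_mul]

theorem not_nine_dvd_of_ne_zero {a : ℤ} (h : (a : ZMod 9) ≠ 0) : ¬ 9 ∣ a := by
  simpa [ZMod.intCast_zmod_eq_zero_iff_dvd] using h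

theorem blockStep_iterate_not_dvd (k : ℕ) :
    ¬ 3 ∣ (blockStep^[k] ((1, -1, 1) : ℤ × ℤ × ℤ)).1 ∧
      ¬ 3 ∣ (blockStep^[k] ((1, -1, 1) : ℤ × ℤ × ℤ)).2.1 ∧
      ¬ 9 ∣ (blockStep^[k] ((1, -1, 1) : ℤ × ℤ × ℤ)).2.2 := by
  have hcast := (blockStep_semiconj (Int.castRingHom (ZMod 9))).iterate_right k (1, -1, 1)
  simp only [Prod.map_apply, eq_intCast, Int.cast_one, Int.cast_neg] at hcast
  obtain ⟨h₀, h₁, h₂⟩ := blockStep_iterate_mod_nine k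
  rw [← hcast] at h₀ h₁ h₂
  exact ⟨not_three_dvd_of_three_mul_ne_zero h₀, not_three_dvd_of_three_mul_ne_zero h₁,
    not_nine_dvd_of_ne_zero h₂⟩

section PadicVal

variable {p : ℕ} [Fact p.Prime]

theorem padicValInt_pow_mul (k : ℕ) {a : ℤ} (ha : a ≠ 0) :
    padicValInt p ((p : ℤ) ^ k * a) = k + padicValInt p a := by
  induction k with
  | zero => simp
  | succ k ih =>
    rw [pow_succ, mul_right_comm, padicValInt_mul_eq_succ _
      (mul_ne_zero (pow_ne_zero _ (by exact_mod_cast (Fact.out : p.Prime).ne_zero)) ha), ih]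
    ring

theorem padicValInt_pow_mul_of_not_dvd (k : ℕ) {a : ℤ} (ha : ¬ (p : ℤ) ∣ a) :
    padicValInt p ((p : ℤ) ^ k * a) = k := by
  rw [padicValInt_pow_mul k (by rintro rfl; exact ha (dvd_zero _)),
    padicValInt.eq_zero_of_not_dvd ha, add_zero]

theorem padicValInt_pow_mul_of_not_sq_dvd (k : ℕ) {a : ℤ} (ha : ¬ (p : ℤ) ^ 2 ∣ a) :
    padicValInt p ((p : ℤ) ^ k * a) = k ∨ padicValInt p ((p : ℤ) ^ k * a) = k + 1 := by
  have ha₀ : a ≠ 0 := by rintro rfl; exact ha (dvd_zero _)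
  have hlt : padicValInt p a < 2 := by
    by_contra! h
    exact ha ((padicValInt_dvd_iff 2 a).2 (.inr h))
  rw [padicValInt_pow_mul k ha₀]
  omega

end PadicVal

theorem padicValInt_eval_neg_three_domPoly_pathGraph (k : ℕ) :
    padicValInt 3 ((domPoly (pathGraph (3 * k))).eval (-3)) = k ∧
      padicValInt 3 ((domPoly (pathGraph (3 * k + 1))).eval (-3)) = k + 1 ∧
      (padicValInt 3 ((domPoly (pathGraph (3 * k + 2))).eval (-3)) = k + 1 ∨
        padicValInt 3 ((domPoly (pathGraph (3 * k + 2))).eval (-3)) = k + 2) := by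
  obtain ⟨h₀, h₁, h₂⟩ := domPoly_pathGraph_zero_one_two
  obtain ⟨e₀, e₁, e₂⟩ :=
    blockStep_iterate (d := fun n => (domPoly (pathGraph n)).eval (-3)) (a := 1) (b := -1) (c := 1)
      (fun n => by simp [domPoly_pathGraph_add_three]) (by simp [h₀]) (by simp [h₁])
      (by simp [h₂]) k
  obtain ⟨n₀, n₁, n₂⟩ := blockStep_iterate_not_dvd k
  rw [e₀, e₁, e₂]
  exact ⟨padicValInt_pow_mul_of_not_dvd (p := 3) _ n₀, padicValInt_pow_mul_of_not_dvd (p := 3) _ n₁,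
    padicValInt_pow_mul_of_not_sq_dvd (p := 3) _ n₂⟩

theorem ord3_domPoly_path_neg_three_general (n : ℕ) :
    (n % 3 = 0 ∨ n % 3 = 1 →
        padicValInt 3 ((domPoly (pathGraph n)).eval (-3)) = (n + 2) / 3) ∧
    (n % 3 = 2 →
        padicValInt 3 ((domPoly (pathGraph n)).eval (-3)) = (n + 2) / 3 ∨
        padicValInt 3 ((domPoly (pathGraph n)).eval (-3)) = (n + 2) / 3 + 1) := by
  obtain ⟨k, r, hr, rfl⟩ : ∃ k r, r < 3 ∧ n = 3 * k + r :=
    ⟨n / 3, n % 3, Nat.mod_lt _ (by norm_num), (Nat.div_add_mod n 3).symm⟩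
  obtain ⟨h₀, h₁, h₂⟩ := padicValInt_eval_neg_three_domPoly_pathGraph k
  obtain rfl | rfl | rfl : r = 0 ∨ r = 1 ∨ r = 2 := by omega
  · rw [add_zero]
    omega
  all_goals omega

theorem ord3_domPoly_path_neg_three (n : ℕ) (hn : 1 ≤ n) :
    (n % 3 = 0 ∨ n % 3 = 1 →
        padicValInt 3 ((domPoly (pathGraph n)).eval (-3)) = (n + 2) / 3) ∧
    (n % 3 = 2 →
        padicValInt 3 ((domPoly (pathGraph n)).eval (-3)) = (n + 2) / 3 ∨
        padicValInt 3 ((domPoly (pathGraph n)).eval (-3)) = (n + 2) / 3 + 1) :=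
  ord3_domPoly_path_neg_three_general n
end
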